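/- arXiv:2406.03319 — 2 statements merged into one kernel-verified Lean document; each statement's English description precedes it below -/
import Mathlib

section
/- Let A be a symmetric positive-definite d×d matrix, τ > 0, m ∈ ℝ^d with m ≠ 0, and ρ ∈ ℝ. Define φ(r) = ρ + τ ⟨(2τA + rI)^{-1} m, A (2τA + rI)^{-1} m⟩ for r ≥ 0. Then φ is strictly decreasing on [0, ∞), i.e., φ'(r) = −2τ ⟨A(2τA + rI)^{-1} m, (2τA + rI)^{-2} m⟩ < 0 for all r ≥ 0. -/
open Matrix

noncomputable def phi {d : ℕ} (A : Matrix (Fin d) (Fin d) ℝ) (τ ρ : ℝ) (m : Fin d → ℝ) :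
    ℝ → ℝ := fun r =>
  ρ + τ * (((((2 * τ) • A + r • (1 : Matrix (Fin d) (Fin d) ℝ))⁻¹).mulVec m) ⬝ᵥ
      A.mulVec ((((2 * τ) • A + r • (1 : Matrix (Fin d) (Fin d) ℝ))⁻¹).mulVec m))

attribute [local instance] Matrix.linftyOpNormedRing Matrix.linftyOpNormedAlgebra

theorem stmt2 {d : ℕ} (A : Matrix (Fin d) (Fin d) ℝ) (hA : A.PosDef)
    (τ : ℝ) (hτ : 0 < τ) (m : Fin d → ℝ) (hm : m ≠ 0) (ρ : ℝ) :
    StrictAntiOn (phi A τ ρ m) (Set.Ici 0) ∧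
      ∀ r, 0 ≤ r →
        HasDerivAt (phi A τ ρ m)
          (-(2 * τ) *
            ((A.mulVec ((((2 * τ) • A + r • (1 : Matrix (Fin d) (Fin d) ℝ))⁻¹).mulVec m)) ⬝ᵥ
              ((((2 * τ) • A + r • (1 : Matrix (Fin d) (Fin d) ℝ))⁻¹ *
                ((2 * τ) • A + r • (1 : Matrix (Fin d) (Fin d) ℝ))⁻¹).mulVec m))) r ∧
        -(2 * τ) *
            ((A.mulVec ((((2 * τ) • A + r • (1 : Matrix (Fin d) (Fin d) ℝ))⁻¹).mulVec m)) ⬝ᵥ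
              ((((2 * τ) • A + r • (1 : Matrix (Fin d) (Fin d) ℝ))⁻¹ *
                ((2 * τ) • A + r • (1 : Matrix (Fin d) (Fin d) ℝ))⁻¹).mulVec m)) < 0 := by
  have hAT : Aᵀ = A := hA.isHermitian
  set B : ℝ → Matrix (Fin d) (Fin d) ℝ := fun r => (2 * τ) • A + r • 1 with hBdef
  have hBpos : ∀ r : ℝ, 0 ≤ r → (B r).PosDef := by
    intro r hr
    have h1 : ((2 * τ) • A).PosDef := by
      refine posDef_iff_dotProduct_mulVec.mpr ⟨?_, fun x hx => ?_⟩
      · simp [Matrix.IsHermitian, Matrix.conjTranspose_smul, hA.isHermitian.eq, hAT]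
      · have := hA.dotProduct_mulVec_pos hx
        simp only [smul_mulVec, dotProduct_smul, smul_eq_mul]
        positivity
    have h2 : (r • (1 : Matrix (Fin d) (Fin d) ℝ)).PosSemidef := by
      refine posSemidef_iff_dotProduct_mulVec.mpr ⟨?_, fun x => ?_⟩
      · simp [Matrix.IsHermitian]
      · have : (star x) ⬝ᵥ x ≥ 0 := dotProduct_star_self_nonneg x
        simp only [smul_mulVec, one_mulVec, dotProduct_smul, smul_eq_mul]
        positivity
    exact h1.add_posSemidef h2
  -- the key derivative fact
  have key : ∀ r : ℝ, 0 ≤ r →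
      HasDerivAt (phi A τ ρ m)
        (-(2 * τ) * ((A.mulVec (((B r)⁻¹).mulVec m)) ⬝ᵥ
          (((B r)⁻¹ * (B r)⁻¹).mulVec m))) r := by
    intro r hr
    have hU : IsUnit (B r) := (hBpos r hr).isUnit
    set N : Matrix (Fin d) (Fin d) ℝ := (B r)⁻¹ with hN
    -- derivative of r ↦ B r is 1
    have hBder : HasDerivAt B (1 : Matrix (Fin d) (Fin d) ℝ) r := by
      have : HasDerivAt (fun s : ℝ => s • (1 : Matrix (Fin d) (Fin d) ℝ))
          ((1:ℝ) • (1 : Matrix (Fin d) (Fin d) ℝ)) r := (hasDerivAt_id r).smul_const _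
      have h := this.const_add ((2 * τ) • A)
      rw [one_smul] at h
      exact h
    -- derivative of r ↦ (B r)⁻¹ is -(N*N)
    have hcoe : (↑hU.unit⁻¹ : Matrix (Fin d) (Fin d) ℝ) = N := by
      rw [hN, Matrix.nonsing_inv_eq_ringInverse, ← Ring.inverse_unit hU.unit, hU.unit_spec]
    have hinv0 : HasDerivAt (fun s => Ring.inverse (B s)) (-(N * N)) r := by
      have h := (hasFDerivAt_ringInverse (𝕜 := ℝ) hU.unit)
      rw [hU.unit_spec] at h
      have := h.comp_hasDerivAt r hBder
      simp [hcoe] at this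
      exact this
    have hinv : HasDerivAt (fun s => (B s)⁻¹) (-(N * N)) r := by
      have : (fun s => (B s)⁻¹) = fun s => Ring.inverse (B s) := by
        funext s; exact Matrix.nonsing_inv_eq_ringInverse _
      rw [this]; exact hinv0
    -- entrywise derivatives
    have hentry : ∀ i j, HasDerivAt (fun s => (B s)⁻¹ i j) ((-(N * N)) i j) r := by
      intro i j
      have h := ((Matrix.entryLinearMap ℝ ℝ i j).toContinuousLinearMap).hasFDerivAt.comp_hasDerivAt
        r hinv
      exact h
    -- derivative of x s := (B s)⁻¹ *ᵥ m
    have hx : ∀ i, HasDerivAt (fun s => ((B s)⁻¹.mulVec m) i) (((-(N * N)).mulVec m) i) r := by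
      intro i
      simpa [Matrix.mulVec, dotProduct] using
        HasDerivAt.fun_sum (fun j _ => (hentry i j).mul_const (m j))
    have hAx : ∀ i, HasDerivAt (fun s => (A.mulVec ((B s)⁻¹.mulVec m)) i)
        ((A.mulVec ((-(N * N)).mulVec m)) i) r := by
      intro i
      simpa [Matrix.mulVec, dotProduct] using
        HasDerivAt.fun_sum (fun j _ => (hx j).const_mul (A i j))
    have hdot : HasDerivAt (fun s => ((B s)⁻¹.mulVec m) ⬝ᵥ A.mulVec ((B s)⁻¹.mulVec m))
        ((((-(N * N)).mulVec m) ⬝ᵥ A.mulVec (N.mulVec m))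
          + ((N.mulVec m) ⬝ᵥ A.mulVec ((-(N * N)).mulVec m))) r := by
      have := HasDerivAt.fun_sum (fun i (_ : i ∈ Finset.univ) => (hx i).mul (hAx i))
      simpa [dotProduct, Finset.sum_add_distrib, mul_comm] using this
    have hphi : HasDerivAt (phi A τ ρ m)
        (τ * ((((-(N * N)).mulVec m) ⬝ᵥ A.mulVec (N.mulVec m))
          + ((N.mulVec m) ⬝ᵥ A.mulVec ((-(N * N)).mulVec m)))) r :=
      (hdot.const_mul τ).const_add ρ
    -- now rewrite the derivative value
    have hval : τ * ((((-(N * N)).mulVec m) ⬝ᵥ A.mulVec (N.mulVec m))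
          + ((N.mulVec m) ⬝ᵥ A.mulVec ((-(N * N)).mulVec m)))
        = -(2 * τ) * ((A.mulVec (N.mulVec m)) ⬝ᵥ ((N * N).mulVec m)) := by
      have e1 : ((-(N * N)).mulVec m) ⬝ᵥ A.mulVec (N.mulVec m)
          = -(((N * N).mulVec m) ⬝ᵥ A.mulVec (N.mulVec m)) := by
        simp [Matrix.neg_mulVec]
      have e2 : ((N * N).mulVec m) ⬝ᵥ A.mulVec (N.mulVec m)
          = (A.mulVec (N.mulVec m)) ⬝ᵥ ((N * N).mulVec m) := dotProduct_comm _ _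
      have e3 : (N.mulVec m) ⬝ᵥ A.mulVec ((-(N * N)).mulVec m)
          = -((N.mulVec m) ⬝ᵥ A.mulVec (((N * N)).mulVec m)) := by
        simp [Matrix.neg_mulVec, Matrix.mulVec_neg, dotProduct_neg]
      have e4 : (N.mulVec m) ⬝ᵥ A.mulVec (((N * N)).mulVec m)
          = (A.mulVec (N.mulVec m)) ⬝ᵥ ((N * N).mulVec m) := by
        rw [Matrix.dotProduct_mulVec, ← Matrix.mulVec_transpose, hAT]
      rw [e1, e2, e3, e4]; ring
    rw [hval] at hphi
    exact hphi
  -- negativity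
  have neg : ∀ r : ℝ, 0 ≤ r →
      -(2 * τ) * ((A.mulVec (((B r)⁻¹).mulVec m)) ⬝ᵥ
        (((B r)⁻¹ * (B r)⁻¹).mulVec m)) < 0 := by
    intro r hr
    have hU : IsUnit (B r) := (hBpos r hr).isUnit
    set N : Matrix (Fin d) (Fin d) ℝ := (B r)⁻¹ with hN
    have hNU : IsUnit N := (hBpos r hr).inv.isUnit
    set y : Fin d → ℝ := N.mulVec m with hy
    set z : Fin d → ℝ := N.mulVec y with hz
    have hz' : (N * N).mulVec m = z := by rw [hz, hy, Matrix.mulVec_mulVec]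
    have hzne : z ≠ 0 := by
      have hinj : Function.Injective N.mulVec := Matrix.mulVec_injective_iff_isUnit.2 hNU
      intro h
      apply hm
      have hy0 : y = 0 := by
        apply hinj; rw [← hz, h, Matrix.mulVec_zero]
      apply hinj; rw [← hy, hy0, Matrix.mulVec_zero]
    have hyz : y = (B r).mulVec z := by
      rw [hz, Matrix.mulVec_mulVec, Matrix.mul_nonsing_inv _ ((Matrix.isUnit_iff_isUnit_det _).1 hU), Matrix.one_mulVec]
    -- S = (A *ᵥ y) ⬝ᵥ z > 0
    have hS : 0 < (A.mulVec y) ⬝ᵥ z := by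
      have hAy : A.mulVec y = (2 * τ) • (A.mulVec (A.mulVec z)) + r • (A.mulVec z) := by
        rw [hyz, hBdef]
        simp [Matrix.add_mulVec, Matrix.smul_mulVec, Matrix.mulVec_mulVec,
          Matrix.one_mulVec, Matrix.mulVec_smul, Matrix.mulVec_add]
      rw [hAy]
      have t1 : (A.mulVec (A.mulVec z)) ⬝ᵥ z = (A.mulVec z) ⬝ᵥ (A.mulVec z) := by
        rw [dotProduct_comm, Matrix.dotProduct_mulVec, ← Matrix.mulVec_transpose, hAT,
          dotProduct_comm]
      have hAzne : A.mulVec z ≠ 0 := by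
        have hinj : Function.Injective A.mulVec := Matrix.mulVec_injective_iff_isUnit.2 hA.isUnit
        intro h; exact hzne (hinj (h.trans (Matrix.mulVec_zero A).symm))
      have t1pos : 0 < (A.mulVec z) ⬝ᵥ (A.mulVec z) := by
        have := Matrix.dotProduct_star_self_pos_iff (v := A.mulVec z)
        simpa [star_trivial] using this.2 hAzne
      have t2 : 0 ≤ r * ((A.mulVec z) ⬝ᵥ z) := by
        have := hA.dotProduct_mulVec_pos hzne
        rw [star_trivial] at this
        have h2 : (A.mulVec z) ⬝ᵥ z = z ⬝ᵥ (A.mulVec z) := dotProduct_comm _ _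
        nlinarith
      simp only [add_dotProduct, smul_dotProduct, smul_eq_mul, t1]
      nlinarith
    rw [hz']
    nlinarith
  refine ⟨?_, fun r hr => ⟨key r hr, neg r hr⟩⟩
  apply strictAntiOn_of_deriv_neg (convex_Ici 0)
  · exact fun x hx => ((key x hx).continuousAt).continuousWithinAt
  · intro x hx
    rw [interior_Ici] at hx
    rw [(key x hx.le).deriv]
    exact neg x hx.le
end

section
/- Let A be a symmetric positive-definite d×d matrix, τ > 0, and m ∈ ℝ^d. Define φ(r) = ρ + τ ⟨(2τA + rI)^{-1} m, A (2τA + rI)^{-1} m⟩. If ‖m‖² · ‖A^{-1}‖² < 4τ², where ‖A^{-1}‖ is the operator norm, then |φ'(r)| < 1 for all r ≥ 0, and hence the fixed-point iteration r_{l+1} = φ(r_l) converges to the unique fixed point of φ in (0,∞) for any starting point r_0 ∈ (0,∞), provided ρ > 0 and m ≠ 0. -/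
open Matrix Finset

private lemma dot_expand {d : ℕ} (v : OrthonormalBasis (Fin d) ℝ (EuclideanSpace ℝ (Fin d)))
    (a b : Fin d → ℝ) :
    (∑ i, a i • ⇑(v i)) ⬝ᵥ (∑ j, b j • ⇑(v j)) = ∑ i, a i * b i := by
  have h1 := v.orthonormal.inner_sum a b Finset.univ
  have h2 : inner (𝕜 := ℝ) (∑ i, a i • v i) (∑ i, b i • v i)
      = (∑ i, a i • ⇑(v i)) ⬝ᵥ (∑ j, b j • ⇑(v j)) := by
    rw [PiLp.inner_apply]
    simp only [RCLike.inner_apply, starRingEnd_apply, star_trivial]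
    simp only [WithLp.ofLp_sum, WithLp.ofLp_smul, dotProduct]
    exact Finset.sum_congr rfl fun x _ => mul_comm _ _
  rw [← h2, h1]
  simp

private lemma phi_eq {d : ℕ} (A : Matrix (Fin d) (Fin d) ℝ) (hA : A.PosDef)
    (τ ρ : ℝ) (m : Fin d → ℝ) (r : ℝ)
    (hr : ∀ i, 0 < 2 * τ * hA.1.eigenvalues i + r) :
    phi A τ ρ m r
    = ρ + τ * ∑ i, hA.1.eigenvalues i *
        ((hA.1.eigenvectorBasis.repr (WithLp.toLp 2 m) i) / (2 * τ * hA.1.eigenvalues i + r)) ^ 2 := by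
  set e := hA.1.eigenvalues with he
  set v := hA.1.eigenvectorBasis with hv
  set B := (2 * τ) • A + r • (1 : Matrix (Fin d) (Fin d) ℝ) with hB
  set c : Fin d → ℝ := fun i => v.repr (WithLp.toLp 2 m) i with hc
  have hAv : ∀ i, A *ᵥ ⇑(v i) = e i • ⇑(v i) := hA.1.mulVec_eigenvectorBasis
  have hBv : ∀ i, B *ᵥ ⇑(v i) = (2 * τ * e i + r) • ⇑(v i) := by
    intro i
    rw [hB, add_mulVec, smul_mulVec, hAv, smul_mulVec, Matrix.one_mulVec]
    rw [smul_smul, add_smul]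
  have hm : ∀ y : Fin d → ℝ, y = ∑ i, v.repr (WithLp.toLp 2 y) i • ⇑(v i) := fun y => by
    have := congrArg WithLp.ofLp (v.sum_repr (WithLp.toLp 2 y))
    simpa [WithLp.ofLp_sum, WithLp.ofLp_smul] using this.symm
  have hsolve : ∀ y : Fin d → ℝ,
      B *ᵥ (∑ i, (v.repr (WithLp.toLp 2 y) i / (2 * τ * e i + r)) • ⇑(v i)) = y := by
    intro y
    have h := map_sum (Matrix.mulVecLin B) (fun i => (v.repr (WithLp.toLp 2 y) i / (2 * τ * e i + r)) • ⇑(v i)) univ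
    simp only [Matrix.mulVecLin_apply, Matrix.mulVec_smul] at h
    rw [h]
    nth_rewrite 2 [hm y]
    refine Finset.sum_congr rfl fun i _ => ?_
    rw [hBv, smul_smul, div_mul_cancel₀]
    exact (hr i).ne'
  set w : Fin d → ℝ := ∑ i, (c i / (2 * τ * e i + r)) • ⇑(v i) with hw
  have hBw : B *ᵥ w = m := hsolve m
  have hBunit : IsUnit B := by
    rw [← Matrix.mulVec_surjective_iff_isUnit]
    exact fun y => ⟨_, hsolve y⟩
  have hinv : B⁻¹ *ᵥ m = w := by
    rw [← hBw, Matrix.mulVec_mulVec,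
      Matrix.nonsing_inv_mul _ ((Matrix.isUnit_iff_isUnit_det B).mp hBunit), Matrix.one_mulVec]
  have hAw : A *ᵥ w = ∑ i, (e i * (c i / (2 * τ * e i + r))) • ⇑(v i) := by
    rw [hw]
    have h := map_sum (Matrix.mulVecLin A) (fun i => (c i / (2 * τ * e i + r)) • ⇑(v i)) univ
    simp only [Matrix.mulVecLin_apply, Matrix.mulVec_smul] at h
    rw [h]
    refine Finset.sum_congr rfl fun i _ => ?_
    rw [hAv, smul_smul, mul_comm]
  show ρ + τ * ((B⁻¹ *ᵥ m) ⬝ᵥ (A *ᵥ (B⁻¹ *ᵥ m))) = _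
  rw [hinv, hAw, dot_expand v]
  congr 2
  exact Finset.sum_congr rfl fun i _ => by ring

theorem stmt6 {d : ℕ} (A : Matrix (Fin d) (Fin d) ℝ) (hA : A.PosDef)
    (τ : ℝ) (hτ : 0 < τ) (m : Fin d → ℝ) (ρ : ℝ)
    (hcontr : (∑ i, (m i) ^ 2) * ‖Matrix.toEuclideanCLM (𝕜 := ℝ) A⁻¹‖ ^ 2 < 4 * τ ^ 2) :
    (∀ r, 0 ≤ r → |deriv (phi A τ ρ m) r| < 1) ∧
      (0 < ρ → m ≠ 0 →
        ∃ rs : ℝ, 0 < rs ∧ phi A τ ρ m rs = rs ∧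
          (∀ r, 0 < r → phi A τ ρ m r = r → r = rs) ∧
          ∀ r₀, 0 < r₀ →
            Filter.Tendsto (fun l => (phi A τ ρ m)^[l] r₀) Filter.atTop (nhds rs)) := by
  set e := hA.1.eigenvalues with he
  set v := hA.1.eigenvectorBasis with hv
  set c : Fin d → ℝ := fun i => v.repr (WithLp.toLp 2 m) i with hc
  set M : ℝ := ‖Matrix.toEuclideanCLM (𝕜 := ℝ) A⁻¹‖ with hM
  have hM0 : 0 ≤ M := norm_nonneg _
  have hepos : ∀ i, 0 < e i := fun i => hA.eigenvalues_pos i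
  -- the open set where the scalar formula holds
  set G : Set ℝ := ⋂ i, Set.Ioi (-(2 * τ * e i)) with hG
  have hGmem : ∀ r : ℝ, r ∈ G ↔ ∀ i, 0 < 2 * τ * e i + r := by
    intro r
    simp only [hG, Set.mem_iInter, Set.mem_Ioi, neg_lt]
    constructor
    · intro h i; linarith [h i]
    · intro h i; linarith [h i]
  have hGopen : IsOpen G := isOpen_iInter_of_finite fun i => isOpen_Ioi
  have hIciG : Set.Ici (0 : ℝ) ⊆ G := by
    intro r hr
    rw [hGmem]
    intro i
    have := hepos i
    have : 0 < 2 * τ * e i := by positivity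
    have hr0 : (0:ℝ) ≤ r := hr
    linarith
  -- Parseval
  have hparse : ∑ i, c i ^ 2 = ∑ i, m i ^ 2 := by
    have hm : m = ∑ i, c i • ⇑(v i) := by
      have := congrArg WithLp.ofLp (v.sum_repr (WithLp.toLp 2 m))
      simpa [WithLp.ofLp_sum, WithLp.ofLp_smul] using this.symm
    have h1 : m ⬝ᵥ m = ∑ i, c i * c i := by
      conv_lhs => rw [hm]
      exact dot_expand v c c
    have h2 : m ⬝ᵥ m = ∑ i, m i * m i := rfl
    calc ∑ i, c i ^ 2 = ∑ i, c i * c i := by simp [pow_two]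
      _ = m ⬝ᵥ m := h1.symm
      _ = ∑ i, m i * m i := h2
      _ = ∑ i, m i ^ 2 := by simp [pow_two]
  -- eigenvalue bound from operator norm
  have hinvle : ∀ i, (e i)⁻¹ ≤ M := by
    intro i
    have hAunit : IsUnit A.det := (Matrix.isUnit_iff_isUnit_det A).mp hA.isUnit
    have hAv : A *ᵥ ⇑(v i) = e i • ⇑(v i) := hA.1.mulVec_eigenvectorBasis i
    have hAinv : A⁻¹ *ᵥ ⇑(v i) = (e i)⁻¹ • ⇑(v i) := by
      have h1 : A⁻¹ *ᵥ (A *ᵥ ⇑(v i)) = ⇑(v i) := by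
        rw [Matrix.mulVec_mulVec, Matrix.nonsing_inv_mul _ hAunit, Matrix.one_mulVec]
      rw [hAv, Matrix.mulVec_smul] at h1
      have := congrArg (fun x => (e i)⁻¹ • x) h1
      simpa [smul_smul, inv_mul_cancel₀ (hepos i).ne'] using this
    have hclm : Matrix.toEuclideanCLM (𝕜 := ℝ) A⁻¹ (v i) = (e i)⁻¹ • (v i) := by
      apply (WithLp.equiv 2 _).injective
      rw [WithLp.equiv_apply, Matrix.ofLp_toEuclideanCLM]
      exact hAinv
    have hnorm : ‖Matrix.toEuclideanCLM (𝕜 := ℝ) A⁻¹ (v i)‖ = (e i)⁻¹ := by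
      rw [hclm, norm_smul, v.orthonormal.1 i]
      simp only [mul_one, Real.norm_eq_abs]
      exact abs_of_nonneg (inv_nonneg.mpr (hepos i).le)
    calc (e i)⁻¹ = ‖Matrix.toEuclideanCLM (𝕜 := ℝ) A⁻¹ (v i)‖ := hnorm.symm
      _ ≤ M * ‖v i‖ := (Matrix.toEuclideanCLM (𝕜 := ℝ) A⁻¹).le_opNorm _
      _ = M := by rw [v.orthonormal.1 i, mul_one]
  -- uniform Lipschitz constant
  set L : ℝ := (∑ i, m i ^ 2) * M ^ 2 / (4 * τ ^ 2) with hL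
  have hL0 : 0 ≤ L := by positivity
  have hL1 : L < 1 := by
    rw [hL, div_lt_one (by positivity)]
    exact hcontr
  -- derivative of phi on G
  have hphideriv : ∀ r ∈ G, HasDerivAt (phi A τ ρ m)
      (τ * ∑ i, -2 * (e i * c i ^ 2) / (2 * τ * e i + r) ^ 3) r := by
    intro r hrG
    have hr := (hGmem r).mp hrG
    have hterm : ∀ i ∈ univ, HasDerivAt
        (fun s => (e i * c i ^ 2) * (((2 * τ * e i + s) ^ 2)⁻¹))
        (-2 * (e i * c i ^ 2) / (2 * τ * e i + r) ^ 3) r := by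
      intro i _
      have h1 : HasDerivAt (fun s : ℝ => 2 * τ * e i + s) 1 r :=
        (hasDerivAt_id r).const_add _
      have h2 := (h1.pow 2).inv (pow_ne_zero 2 (hr i).ne')
      have h3 := h2.const_mul (e i * c i ^ 2)
      refine h3.congr_deriv ?_
      have hx := (hr i).ne'
      simp only [Pi.pow_apply, Nat.cast_ofNat]
      generalize 2 * τ * e i + r = x at hx ⊢
      field_simp
      ring
    have hsum := HasDerivAt.fun_sum hterm
    have := (hsum.const_mul τ).const_add ρ
    have heq : (fun s => ρ + τ * ∑ i, (e i * c i ^ 2) * (((2 * τ * e i + s) ^ 2)⁻¹))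
        =ᶠ[nhds r] phi A τ ρ m := by
      filter_upwards [hGopen.mem_nhds hrG] with s hsG
      rw [phi_eq A hA τ ρ m s ((hGmem s).mp hsG)]
      congr 1
      congr 1
      refine Finset.sum_congr rfl fun i _ => ?_
      rw [div_pow]
      ring
    exact (this.congr_of_eventuallyEq heq.symm)
  -- bound on derivative
  have hbound : ∀ r, 0 ≤ r → |deriv (phi A τ ρ m) r| ≤ L := by
    intro r hr0
    have hrG := hIciG hr0
    have hr := (hGmem r).mp hrG
    rw [(hphideriv r hrG).deriv]
    set S : ℝ := τ * ∑ i, 2 * (e i * c i ^ 2) / (2 * τ * e i + r) ^ 3 with hS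
    have hDS : τ * ∑ i, -2 * (e i * c i ^ 2) / (2 * τ * e i + r) ^ 3 = -S := by
      rw [hS, ← mul_neg, ← Finset.sum_neg_distrib]
      congr 1
      exact Finset.sum_congr rfl fun i _ => by ring
    rw [hDS, abs_neg]
    have hS0 : 0 ≤ S := by
      rw [hS]
      refine mul_nonneg hτ.le (Finset.sum_nonneg fun i _ => ?_)
      have := hepos i
      have := hr i
      positivity
    rw [abs_of_nonneg hS0]
    -- termwise bound
    have hterm : ∀ i, τ * (2 * (e i * c i ^ 2) / (2 * τ * e i + r) ^ 3)
        ≤ c i ^ 2 * M ^ 2 / (4 * τ ^ 2) := by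
      intro i
      have hei := hepos i
      have hMi := hinvle i
      have ha : 0 ≤ 2 * (e i * c i ^ 2) :=
        mul_nonneg (by norm_num) (mul_nonneg hei.le (sq_nonneg _))
      have hbp : (0:ℝ) < 2 * τ * e i := by positivity
      have h1 : τ * (2 * (e i * c i ^ 2) / (2 * τ * e i + r) ^ 3)
          ≤ τ * (2 * (e i * c i ^ 2) / (2 * τ * e i) ^ 3) := by
        have hd : (2 * τ * e i) ^ 3 ≤ (2 * τ * e i + r) ^ 3 :=
          pow_le_pow_left₀ hbp.le (by linarith) 3
        have hdp : (0:ℝ) < (2 * τ * e i) ^ 3 := by positivity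
        exact mul_le_mul_of_nonneg_left (div_le_div_of_nonneg_left ha hdp hd) hτ.le
      have h2 : τ * (2 * (e i * c i ^ 2) / (2 * τ * e i) ^ 3)
          = c i ^ 2 * ((e i)⁻¹) ^ 2 / (4 * τ ^ 2) := by
        field_simp
        ring
      have hsq : ((e i)⁻¹) ^ 2 ≤ M ^ 2 := by nlinarith [inv_nonneg.mpr hei.le]
      have h3 : c i ^ 2 * ((e i)⁻¹) ^ 2 / (4 * τ ^ 2)
          ≤ c i ^ 2 * M ^ 2 / (4 * τ ^ 2) := by
        have h4 : (0:ℝ) < 4 * τ ^ 2 := by positivity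
        exact div_le_div_of_nonneg_right (mul_le_mul_of_nonneg_left hsq (sq_nonneg (c i))) h4.le
      linarith
    calc S = ∑ i, τ * (2 * (e i * c i ^ 2) / (2 * τ * e i + r) ^ 3) := by
          rw [hS, Finset.mul_sum]
      _ ≤ ∑ i, c i ^ 2 * M ^ 2 / (4 * τ ^ 2) := Finset.sum_le_sum fun i _ => hterm i
      _ = (∑ i, c i ^ 2) * M ^ 2 / (4 * τ ^ 2) := by
          rw [← Finset.sum_div, ← Finset.sum_mul]
      _ = L := by rw [hL, hparse]
  constructor
  · exact fun r hr => lt_of_le_of_lt (hbound r hr) hL1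
  · intro hρ _
    -- phi maps Ici 0 into itself
    have hpos : ∀ r, 0 ≤ r → ρ ≤ phi A τ ρ m r := by
      intro r hr0
      have hr := (hGmem r).mp (hIciG hr0)
      rw [phi_eq A hA τ ρ m r hr]
      have : 0 ≤ ∑ i, e i * (c i / (2 * τ * e i + r)) ^ 2 :=
        Finset.sum_nonneg fun i _ => mul_nonneg (hepos i).le (sq_nonneg _)
      nlinarith
    have hmaps : Set.MapsTo (phi A τ ρ m) (Set.Ici 0) (Set.Ici 0) := by
      intro r hr
      exact le_trans hρ.le (hpos r hr)
    -- Lipschitz on Ici 0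
    have hlip : ∀ x ∈ Set.Ici (0:ℝ), ∀ y ∈ Set.Ici (0:ℝ),
        dist (phi A τ ρ m x) (phi A τ ρ m y) ≤ L * dist x y := by
      intro x hx y hy
      rw [Real.dist_eq, Real.dist_eq]
      have := Convex.norm_image_sub_le_of_norm_deriv_le
        (f := phi A τ ρ m) (s := Set.Ici 0)
        (fun z hz => ((hphideriv z (hIciG hz)).differentiableAt))
        (fun z hz => hbound z hz) (convex_Ici 0) hy hx
      simpa [Real.norm_eq_abs] using this
    have hlipOn : LipschitzOnWith L.toNNReal (phi A τ ρ m) (Set.Ici 0) :=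
      LipschitzOnWith.of_dist_le_mul fun x hx y hy => by
        rw [Real.coe_toNNReal L hL0]; exact hlip x hx y hy
    have hK1 : L.toNNReal < 1 := by
      rw [← NNReal.coe_lt_coe, Real.coe_toNNReal _ hL0, NNReal.coe_one]
      exact hL1
    have hres : ContractingWith L.toNNReal (hmaps.restrict _ _ _) :=
      ⟨hK1, hlipOn.mapsToRestrict hmaps⟩
    have hcomplete : IsComplete (Set.Ici (0:ℝ)) := isClosed_Ici.isComplete
    obtain ⟨rs, hrsmem, hrsfix, -, -⟩ :=
      ContractingWith.exists_fixedPoint' hcomplete hmaps hres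
        (Set.mem_Ici.mpr zero_le_one) (edist_ne_top _ _)
    have huniq : ∀ y, 0 ≤ y → phi A τ ρ m y = y → y = rs := by
      intro y hy hfy
      by_contra hne
      have hd : dist y rs ≤ L * dist y rs := by
        calc dist y rs = dist (phi A τ ρ m y) (phi A τ ρ m rs) := by
              rw [hfy, hrsfix.eq]
          _ ≤ L * dist y rs := hlip y hy rs hrsmem
      have hp : 0 < dist y rs := dist_pos.mpr hne
      nlinarith
    have h0 : ρ ≤ rs := by
      have := hpos rs hrsmem
      rw [hrsfix.eq] at this
      exact this
    refine ⟨rs, lt_of_lt_of_le hρ h0, hrsfix.eq, fun r hr hfix => huniq r hr.le hfix, ?_⟩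
    intro r₀ hr₀
    obtain ⟨y, hymem, hyfix, hytend, -⟩ :=
      ContractingWith.exists_fixedPoint' hcomplete hmaps hres
        (Set.mem_Ici.mpr hr₀.le) (edist_ne_top _ _)
    rwa [huniq y hymem hyfix.eq] at hytend
end
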